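/- Let X and Y be normed spaces and T_k ∈ B(X,Y). The summing operator S : M^∞_R(∑_k T_k) → Y defined by S(x) = R-lim of the Riesz means of the partial sums of ∑_k T_k x_k (the Riesz sum of the series ∑_k T_k x_k) is a bounded linear operator if and only if ∑_k T_k is c_0(X)-multiplier Cauchy. -/

import Mathlib

/-!
If `S` is bounded by `C`, cutting a null sequence down to `[m, n)` gives a finitely supported
bounded sequence whose Riesz sum is its ordinary sum `∑_{m ≤ k < n} T_k x_k`; hence that sum has
norm at most `C · sup_{k ≥ m} ‖x_k‖`, which is the Cauchy condition. Conversely, a gliding hump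
shows that the partial sums `∑_{k < n} T_k y_k` of a `c₀(X)`-multiplier Cauchy series are bounded
uniformly for `‖y‖_∞ ≤ 1`: otherwise there are consecutive blocks carrying bumps of size
`1/(j+1)` whose block sums have norm `> 1`, and gluing the bumps gives a null sequence with
non-Cauchy partial sums. Riesz means with nonnegative weights are averages of partial sums, so
they and their limit inherit the bound.
-/

open Filter Finset Topology BoundedContinuousFunction

/-- A series `∑ s k` is Riesz convergent to `l` (w.r.t. weights `r`) if the Riesz
means of its partial sums converge in norm to `l`. -/
def RieszSeriesConvTo {Y : Type*} [NormedAddCommGroup Y] [NormedSpace ℝ Y]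
    (r : ℕ → ℝ) (s : ℕ → Y) (l : Y) : Prop :=
  Tendsto (fun n => (∑ k ∈ Finset.range (n + 1), r k)⁻¹ •
      ∑ k ∈ Finset.range (n + 1), r k • (∑ j ∈ Finset.range (k + 1), s j))
    atTop (𝓝 l)

section RieszMean

variable {Y : Type*} [NormedAddCommGroup Y] [NormedSpace ℝ Y]

noncomputable def rieszMean (r : ℕ → ℝ) (p : ℕ → Y) (n : ℕ) : Y :=
  (∑ k ∈ range (n + 1), r k)⁻¹ • ∑ k ∈ range (n + 1), r k • p k

theorem rieszSeriesConvTo_iff_tendsto_rieszMean (r : ℕ → ℝ) (s : ℕ → Y) (l : Y) :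
    RieszSeriesConvTo r s l ↔
      Tendsto (rieszMean r fun k => ∑ j ∈ range (k + 1), s j) atTop (𝓝 l) :=
  Iff.rfl

theorem norm_rieszMean_le {r : ℕ → ℝ} (hr : ∀ k, 0 ≤ r k) {p : ℕ → Y} {M : ℝ}
    (hp : ∀ k, ‖p k‖ ≤ M) (n : ℕ) : ‖rieszMean r p n‖ ≤ M := by
  have hM : 0 ≤ M := (norm_nonneg _).trans (hp 0)
  set R := ∑ k ∈ range (n + 1), r k
  have hR : 0 ≤ R := sum_nonneg fun k _ => hr k
  have hsum : ‖∑ k ∈ range (n + 1), r k • p k‖ ≤ R * M := by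
    calc ‖∑ k ∈ range (n + 1), r k • p k‖ ≤ ∑ k ∈ range (n + 1), r k * M :=
          norm_sum_le_of_le _ fun k _ => by
            rw [norm_smul, Real.norm_of_nonneg (hr k)]
            exact mul_le_mul_of_nonneg_left (hp k) (hr k)
      _ = R * M := (sum_mul _ _ _).symm
  calc ‖rieszMean r p n‖ = R⁻¹ * ‖∑ k ∈ range (n + 1), r k • p k‖ := by
        rw [rieszMean, norm_smul, Real.norm_of_nonneg (inv_nonneg.2 hR)]
    _ ≤ R⁻¹ * (R * M) := by gcongr
    _ ≤ M := by
        rcases hR.eq_or_lt with h | h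
        · simp [← h, hM]
        · rw [inv_mul_cancel_left₀ h.ne']

theorem tendsto_rieszMean_of_eventually_eq {r : ℕ → ℝ}
    (hR : Tendsto (fun n => ∑ k ∈ range n, r k) atTop atTop) {p : ℕ → Y} {L : Y} {N : ℕ}
    (hp : ∀ k, N ≤ k → p k = L) : Tendsto (rieszMean r p) atTop (𝓝 L) := by
  have hR' : Tendsto (fun n => ∑ k ∈ range (n + 1), r k) atTop atTop :=
    hR.comp (tendsto_add_atTop_nat 1)
  set E : Y := ∑ k ∈ range N, r k • (p k - L)
  have hmean : ∀ᶠ n in atTop, L + (∑ k ∈ range (n + 1), r k)⁻¹ • E = rieszMean r p n := by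
    filter_upwards [eventually_ge_atTop N, hR'.eventually_ne_atTop 0] with n hn hRn
    have hE : ∑ k ∈ range (n + 1), r k • (p k - L) = E :=
      (sum_subset (range_subset_range.2 (by omega)) fun k _ hk => by
        rw [hp k (by simpa using hk), sub_self, smul_zero]).symm
    rw [← hE, rieszMean]
    simp only [smul_sub, sum_sub_distrib, ← sum_smul, smul_smul, inv_mul_cancel₀ hRn, one_smul,
      add_sub_cancel]
  have hlim := tendsto_const_nhds (x := L) |>.add ((tendsto_inv_atTop_zero.comp hR').smul_const E)
  rw [zero_smul, add_zero] at hlim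
  exact hlim.congr' hmean

theorem rieszSeriesConvTo_sum_range_of_eq_zero {r : ℕ → ℝ}
    (hR : Tendsto (fun n => ∑ k ∈ range n, r k) atTop atTop) {s : ℕ → Y} {N : ℕ}
    (hs : ∀ j, N ≤ j → s j = 0) : RieszSeriesConvTo r s (∑ j ∈ range N, s j) :=
  tendsto_rieszMean_of_eventually_eq (N := N) hR fun _ hk =>
    (sum_subset (range_subset_range.2 (by omega)) fun j _ hj => hs j (by simpa using hj)).symm

end RieszMean

theorem StrictMono.exists_block_index {s : ℕ → ℕ} (hs : StrictMono s) (h0 : s 0 = 0) :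
    ∃ idx : ℕ → ℕ, ∀ k, s (idx k) ≤ k ∧ k < s (idx k + 1) := by
  refine ⟨fun k => Nat.findGreatest (fun j => s j ≤ k) k, fun k => ⟨?_, ?_⟩⟩
  · exact Nat.findGreatest_spec (P := fun j => s j ≤ k) (Nat.zero_le k) (by simp [h0])
  · by_contra! h
    exact Nat.findGreatest_is_greatest (Nat.lt_succ_self _) ((hs.id_le _).trans h) h

section MultiplierCauchy

variable {X Y : Type*} [NormedAddCommGroup X] [NormedSpace ℝ X]
  [NormedAddCommGroup Y] [NormedSpace ℝ Y]

def C0MultiplierCauchy (T : ℕ → X →L[ℝ] Y) : Prop :=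
  ∀ x : ℕ → X, Tendsto x atTop (𝓝 0) → CauchySeq (fun n => ∑ k ∈ range n, T k (x k))

variable {T : ℕ → X →L[ℝ] Y}

theorem norm_sum_Ico_le_of_rieszSum_bound {r : ℕ → ℝ}
    (hR : Tendsto (fun n => ∑ k ∈ range n, r k) atTop atTop) {C : ℝ} (hC : 0 ≤ C)
    (hS : ∀ (f : ℕ →ᵇ X) (y : Y), RieszSeriesConvTo r (fun k => T k (f k)) y → ‖y‖ ≤ C * ‖f‖)
    {x : ℕ → X} {δ : ℝ} (hδ : 0 ≤ δ) {m n : ℕ} (hx : ∀ k ∈ Ico m n, ‖x k‖ ≤ δ) :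
    ‖∑ k ∈ Ico m n, T k (x k)‖ ≤ C * δ := by
  set g : ℕ → X := fun k => if k ∈ Ico m n then x k else 0
  have hg : ∀ k, ‖g k‖ ≤ δ := fun k => by
    simp only [g]
    split_ifs with hk
    exacts [hx k hk, norm_zero (E := X) ▸ hδ]
  set f : ℕ →ᵇ X := ofNormedAddCommGroup g continuous_of_discreteTopology δ hg
  have hsum : ∑ k ∈ range n, T k (f k) = ∑ k ∈ Ico m n, T k (x k) := by
    simp only [f, g, coe_ofNormedAddCommGroup, apply_ite (T _), map_zero, sum_ite_mem]
    congr 1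
    exact inter_eq_right.2 fun k hk => mem_range.2 (mem_Ico.1 hk).2
  have hconv := rieszSeriesConvTo_sum_range_of_eq_zero (s := fun k => T k (f k)) (N := n) hR
    fun j hj => by simp [f, g, show ¬j < n by omega]
  rw [hsum] at hconv
  calc ‖∑ k ∈ Ico m n, T k (x k)‖ ≤ C * ‖f‖ := hS f _ hconv
    _ ≤ C * δ := by gcongr; exact norm_ofNormedAddCommGroup_le _ hδ hg

theorem c0MultiplierCauchy_of_rieszSum_bound {r : ℕ → ℝ}
    (hR : Tendsto (fun n => ∑ k ∈ range n, r k) atTop atTop) {C : ℝ} (hC : 0 < C)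
    (hS : ∀ (f : ℕ →ᵇ X) (y : Y), RieszSeriesConvTo r (fun k => T k (f k)) y → ‖y‖ ≤ C * ‖f‖) :
    C0MultiplierCauchy T := by
  intro x hx
  refine Metric.cauchySeq_iff'.2 fun ε hε => ?_
  obtain ⟨N, hN⟩ := Metric.tendsto_atTop.1 hx (ε / (2 * C)) (by positivity)
  refine ⟨N, fun n hn => ?_⟩
  rw [dist_eq_norm, ← sum_Ico_eq_sub _ hn]
  calc ‖∑ k ∈ Ico N n, T k (x k)‖ ≤ C * (ε / (2 * C)) :=
        norm_sum_Ico_le_of_rieszSum_bound hR hC.le hS (by positivity)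
          fun k hk => by simpa using (hN k (mem_Ico.1 hk).1).le
    _ < ε := by field_simp; linarith

theorem norm_sum_apply_le_sum_opNorm (s : Finset ℕ) {y : ℕ → X} (hy : ∀ k, ‖y k‖ ≤ 1) :
    ‖∑ k ∈ s, T k (y k)‖ ≤ ∑ k ∈ s, ‖T k‖ :=
  norm_sum_le_of_le s fun k _ => by simpa using (T k).le_opNorm_of_le (hy k)

theorem exists_norm_sum_Ico_gt_one
    (hunb : ∀ M : ℝ, ∃ n, ∃ y : ℕ → X, (∀ k, ‖y k‖ ≤ 1) ∧ M < ‖∑ k ∈ range n, T k (y k)‖)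
    (a : ℕ) {ε : ℝ} (hε : 0 < ε) :
    ∃ n, ∃ y : ℕ → X, (∀ k, ‖y k‖ ≤ ε) ∧ 1 < ‖∑ k ∈ Ico a n, T k (y k)‖ := by
  obtain ⟨n, y, hy, hbig⟩ := hunb (ε⁻¹ + ∑ k ∈ range a, ‖T k‖)
  have hε' := inv_pos.2 hε
  have hhead := norm_sum_apply_le_sum_opNorm (T := T) (range a) hy
  have han : a ≤ n := by
    by_contra! h
    have := (norm_sum_apply_le_sum_opNorm (range n) hy).trans
      (sum_le_sum_of_subset_of_nonneg (range_subset_range.2 h.le) fun k _ _ => norm_nonneg (T k))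
    linarith
  have htail : ε⁻¹ < ‖∑ k ∈ Ico a n, T k (y k)‖ := by
    rw [← sum_range_add_sum_Ico _ han] at hbig
    linarith [norm_add_le (∑ k ∈ range a, T k (y k)) (∑ k ∈ Ico a n, T k (y k))]
  refine ⟨n, fun k => ε • y k, fun k => ?_, ?_⟩
  · rw [norm_smul, Real.norm_of_nonneg hε.le]
    exact mul_le_of_le_one_right hε.le (hy k)
  · simp_rw [map_smul, ← smul_sum, norm_smul, Real.norm_of_nonneg hε.le]
    calc 1 = ε * ε⁻¹ := (mul_inv_cancel₀ hε.ne').symm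
      _ < ε * ‖∑ k ∈ Ico a n, T k (y k)‖ := mul_lt_mul_of_pos_left htail hε

theorem exists_blocks_norm_sum_gt_one
    (hunb : ∀ M : ℝ, ∃ n, ∃ y : ℕ → X, (∀ k, ‖y k‖ ≤ 1) ∧ M < ‖∑ k ∈ range n, T k (y k)‖) :
    ∃ (s : ℕ → ℕ) (z : ℕ → ℕ → X), StrictMono s ∧ s 0 = 0 ∧
      (∀ j k, ‖z j k‖ ≤ ((j : ℝ) + 1)⁻¹) ∧
      ∀ j, 1 < ‖∑ k ∈ Ico (s j) (s (j + 1)), T k (z j k)‖ := by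
  choose e y hy hbig using fun a (j : ℕ) =>
    exists_norm_sum_Ico_gt_one hunb a (ε := ((j : ℝ) + 1)⁻¹) (by positivity)
  let s : ℕ → ℕ := fun j => Nat.rec 0 (fun j sj => e sj j) j
  have hbig' : ∀ j, 1 < ‖∑ k ∈ Ico (s j) (s (j + 1)), T k (y (s j) j k)‖ :=
    fun j => hbig (s j) j
  refine ⟨s, fun j => y (s j) j, strictMono_nat_of_lt_succ fun j => ?_, rfl,
    fun j => hy (s j) j, hbig'⟩
  by_contra! h
  have := hbig' j
  rw [Ico_eq_empty_of_le h, sum_empty, norm_zero] at this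
  linarith

theorem not_c0MultiplierCauchy_of_blocks {s : ℕ → ℕ} {z : ℕ → ℕ → X} (hs : StrictMono s)
    (h0 : s 0 = 0) (hz : ∀ j k, ‖z j k‖ ≤ ((j : ℝ) + 1)⁻¹)
    (hbig : ∀ j, 1 < ‖∑ k ∈ Ico (s j) (s (j + 1)), T k (z j k)‖) :
    ¬C0MultiplierCauchy T := by
  obtain ⟨idx, hidx⟩ := hs.exists_block_index h0
  have idx_eq : ∀ j, ∀ k ∈ Ico (s j) (s (j + 1)), idx k = j := by
    intro j k hk
    rw [mem_Ico] at hk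
    have h1 := hs.lt_iff_lt.1 ((hidx k).1.trans_lt hk.2)
    have h2 := hs.lt_iff_lt.1 (hk.1.trans_lt (hidx k).2)
    omega
  have idx_tendsto : Tendsto idx atTop atTop := tendsto_atTop_atTop.2 fun J =>
    ⟨s J, fun k hk => Nat.lt_succ_iff.1 (hs.lt_iff_lt.1 (hk.trans_lt (hidx k).2))⟩
  let x : ℕ → X := fun k => z (idx k) k
  have hx : Tendsto x atTop (𝓝 0) :=
    squeeze_zero_norm (fun k => hz _ _)
      (by simpa only [one_div, Function.comp_def] using (tendsto_one_div_add_atTop_nhds_zero_nat (𝕜 := ℝ)).comp idx_tendsto)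
  intro hcauchy
  obtain ⟨N, hN⟩ := Metric.cauchySeq_iff.1 (hcauchy x hx) 1 one_pos
  have hblock : ∑ k ∈ Ico (s N) (s (N + 1)), T k (x k) =
      ∑ k ∈ Ico (s N) (s (N + 1)), T k (z N k) :=
    sum_congr rfl fun k hk => by simp only [x, idx_eq N k hk]
  have hdist := hN (s (N + 1)) (N.le_succ.trans (hs.id_le _)) (s N) (hs.id_le N)
  rw [dist_eq_norm, ← sum_Ico_eq_sub _ (hs.monotone N.le_succ), hblock] at hdist
  linarith [hbig N]

theorem C0MultiplierCauchy.exists_bound (h : C0MultiplierCauchy T) :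
    ∃ C, ∀ n, ∀ y : ℕ → X, (∀ k, ‖y k‖ ≤ 1) → ‖∑ k ∈ range n, T k (y k)‖ ≤ C := by
  by_contra! hunb
  obtain ⟨s, z, hs, h0, hz, hbig⟩ := exists_blocks_norm_sum_gt_one hunb
  exact not_c0MultiplierCauchy_of_blocks hs h0 hz hbig h

theorem C0MultiplierCauchy.exists_pos_bound (h : C0MultiplierCauchy T) :
    ∃ C > 0, ∀ (f : ℕ →ᵇ X) n, ‖∑ k ∈ range n, T k (f k)‖ ≤ C * ‖f‖ := by
  obtain ⟨C, hC⟩ := h.exists_bound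
  refine ⟨max C 1, by positivity, fun f n => ?_⟩
  rcases (norm_nonneg f).eq_or_lt with hf | hf
  · simp [norm_eq_zero.1 hf.symm]
  · have hunit : ∀ k, ‖‖f‖⁻¹ • f k‖ ≤ 1 := fun k => by
      rw [norm_smul, norm_inv, norm_norm]
      exact inv_mul_le_one_of_le₀ (f.norm_coe_le_norm k) hf.le
    have := hC n _ hunit
    simp_rw [map_smul, ← smul_sum, norm_smul, norm_inv, norm_norm, inv_mul_le_iff₀ hf] at this
    calc ‖∑ k ∈ range n, T k (f k)‖ ≤ ‖f‖ * C := this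
      _ ≤ max C 1 * ‖f‖ := by rw [mul_comm]; gcongr; exact le_max_left C 1

theorem rieszSum_bound_of_c0MultiplierCauchy {r : ℕ → ℝ} (hr : ∀ k, 0 ≤ r k)
    (h : C0MultiplierCauchy T) :
    ∃ C > 0, ∀ (f : ℕ →ᵇ X) (y : Y), RieszSeriesConvTo r (fun k => T k (f k)) y →
      ‖y‖ ≤ C * ‖f‖ := by
  obtain ⟨C, hC, hbound⟩ := h.exists_pos_bound
  exact ⟨C, hC, fun f y hy => le_of_tendsto' ((rieszSeriesConvTo_iff_tendsto_rieszMean _ _ _).1 hy).norm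
    (norm_rieszMean_le hr fun k => hbound f (k + 1))⟩

end MultiplierCauchy

theorem summing_operator_continuous_iff_c0_multiplier_cauchy_general
    {X Y : Type*} [NormedAddCommGroup X] [NormedSpace ℝ X]
    [NormedAddCommGroup Y] [NormedSpace ℝ Y]
    (r : ℕ → ℝ) (hr : ∀ k, 0 ≤ r k)
    (hR : Tendsto (fun n => ∑ k ∈ Finset.range n, r k) atTop atTop)
    (T : ℕ → X →L[ℝ] Y) :
    (∃ C > 0, ∀ f : ℕ →ᵇ X, ∀ y : Y,
        RieszSeriesConvTo r (fun k => T k (f k)) y → ‖y‖ ≤ C * ‖f‖) ↔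
    (∀ x : ℕ → X, Tendsto x atTop (𝓝 0) →
        CauchySeq (fun n => ∑ k ∈ Finset.range n, T k (x k))) :=
  ⟨fun ⟨_, hC, hS⟩ => c0MultiplierCauchy_of_rieszSum_bound hR hC hS,
    rieszSum_bound_of_c0MultiplierCauchy hr⟩

/-- The summing operator `S : M^∞_R(∑ T k) → Y`, `S x = R-∑ T k x k`, is bounded
(continuous) iff `∑ T k` is `c₀(X)`-multiplier Cauchy. -/
theorem summing_operator_continuous_iff_c0_multiplier_cauchy
    {X Y : Type*} [NormedAddCommGroup X] [NormedSpace ℝ X]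
    [NormedAddCommGroup Y] [NormedSpace ℝ Y]
    (r : ℕ → ℝ) (hr0 : 0 < r 0) (hr : ∀ k, 0 ≤ r k)
    (hR : Tendsto (fun n => ∑ k ∈ Finset.range n, r k) atTop atTop)
    (T : ℕ → X →L[ℝ] Y) :
    (∃ C > 0, ∀ f : ℕ →ᵇ X, ∀ y : Y,
        RieszSeriesConvTo r (fun k => T k (f k)) y → ‖y‖ ≤ C * ‖f‖) ↔
    (∀ x : ℕ → X, Tendsto x atTop (𝓝 0) →
        CauchySeq (fun n => ∑ k ∈ Finset.range n, T k (x k))) :=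
  summing_operator_continuous_iff_c0_multiplier_cauchy_general r hr hR T
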